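/- Let a : ℕ → ℕ satisfy a(1)=1 and a(d) = (2d-1)!! − ∑_{k=1}^{d-1}(2d-2k-1)!!·a(k) for d ≥ 2. Then for all d ≥ 4, a(d) > (2d-4)·(2d-3)!!. -/

import Mathlib

/-!
Write `S(d) = ∑_{k=1}^{d-1} (2d-2k-1)!! a(k)`, so that `a(d) = (2d-1)!! - S(d)`. Since
`(2d-1)!! = (2d-1) (2d-3)!!`, the claim amounts to `S(d) < 3 (2d-3)!!`.

The recursion gives `a(k) ≤ (2k-1)!!`, and `(2p-1)!! (2q-1)!!` with `p + q` fixed grows as `p, q` move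
apart. So the outer terms `k = 1, d-1` of `S(d)` contribute at most `2 (2d-3)!!`, the terms
`k = 2, d-2` at most `(2 + 3) (2d-5)!!` (as `a(2) = 2`), and each of the `d - 5` inner terms at most
`15 (2d-7)!!`; for `d ≥ 5` this is less than `3 (2d-3)!!`. The case `d = 4` is a direct computation.
-/

open Finset

/-- The double factorial `(2d-1)!! = ∏_{i=1}^d (2i-1)`, with `(-1)!! = oddDF 0 = 1`. -/
def oddDF (d : ℕ) : ℕ := ∏ i ∈ Finset.range d, (2 * i + 1)

lemma oddDF_succ (n : ℕ) : oddDF (n + 1) = (2 * n + 1) * oddDF n := by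
  rw [oddDF, prod_range_succ, mul_comm]
  rfl

lemma oddDF_pos (n : ℕ) : 0 < oddDF n :=
  prod_pos fun _ _ => Nat.succ_pos _

lemma oddDF_add_mul_le_mul_add {j n : ℕ} (m : ℕ) (h : j ≤ n) :
    oddDF (j + m) * oddDF n ≤ oddDF j * oddDF (n + m) := by
  simp only [oddDF, prod_range_add]
  have : ∏ i ∈ range m, (2 * (j + i) + 1) ≤ ∏ i ∈ range m, (2 * (n + i) + 1) :=
    prod_le_prod' fun i _ => by omega
  calc _ = (∏ i ∈ range j, (2 * i + 1)) * (∏ i ∈ range n, (2 * i + 1)) *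
          ∏ i ∈ range m, (2 * (j + i) + 1) := by ring
    _ ≤ (∏ i ∈ range j, (2 * i + 1)) * (∏ i ∈ range n, (2 * i + 1)) *
          ∏ i ∈ range m, (2 * (n + i) + 1) := by gcongr
    _ = _ := by ring

lemma oddDF_mul_oddDF_le {j p q : ℕ} (hp : j ≤ p) (hq : j ≤ q) :
    oddDF p * oddDF q ≤ oddDF j * oddDF (p + q - j) := by
  obtain ⟨m, rfl⟩ := Nat.exists_eq_add_of_le hq
  rw [mul_comm, show p + (j + m) - j = p + m by omega]
  exact oddDF_add_mul_le_mul_add m hp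

lemma sum_Icc_eq_add_sum_Icc_succ {M : Type*} [AddCommMonoid M] (f : ℕ → M) {a b : ℕ}
    (h : a ≤ b) : ∑ k ∈ Icc a b, f k = f a + ∑ k ∈ Icc (a + 1) b, f k := by
  rw [Icc_eq_cons_Ioc h, sum_cons, Icc_add_one_left_eq_Ioc]

def oddDFConv (a : ℕ → ℕ) (d : ℕ) : ℕ := ∑ k ∈ Icc 1 (d - 1), oddDF (d - k) * a k

def OddDFRec (a : ℕ → ℕ) : Prop := ∀ d, 2 ≤ d → a d = oddDF d - oddDFConv a d

section Recursion

variable {a : ℕ → ℕ}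

lemma lt_apply_of_oddDFConv_lt (hrec : OddDFRec a) {d : ℕ} (hd : 2 ≤ d)
    (h : oddDFConv a d < 3 * oddDF (d - 1)) : (2 * d - 4) * oddDF (d - 1) < a d := by
  obtain ⟨n, rfl⟩ := Nat.exists_eq_add_of_le' (by omega : 1 ≤ d)
  rw [Nat.add_sub_cancel] at h ⊢
  rw [hrec _ hd, oddDF_succ, Nat.lt_sub_iff_add_lt]
  have : 2 * (n + 1) - 4 + 3 ≤ 2 * n + 1 := by omega
  nlinarith

lemma le_oddDF_of_oddDFRec (h1 : a 1 = 1) (hrec : OddDFRec a) {k : ℕ} (hk : 1 ≤ k) :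
    a k ≤ oddDF k := by
  obtain rfl | hk := hk.eq_or_lt
  · rw [h1]; rfl
  · exact (hrec k hk).trans_le (Nat.sub_le _ _)

lemma apply_two_of_oddDFRec (h1 : a 1 = 1) (hrec : OddDFRec a) : a 2 = 2 := by
  rw [hrec 2 le_rfl]
  simp only [oddDFConv, Nat.add_one_sub_one, Icc_self, sum_singleton, h1, mul_one]
  rfl

lemma oddDFConv_four_lt (h1 : a 1 = 1) (hrec : OddDFRec a) :
    oddDFConv a 4 < 3 * oddDF 3 := by
  have h3 := le_oddDF_of_oddDFRec h1 hrec (k := 3) (by norm_num)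
  simp only [oddDFConv, Nat.add_one_sub_one, Nat.reduceAdd, Nat.one_le_ofNat, sum_Icc_succ_top,
    Icc_self, sum_singleton, h1, mul_one, Nat.reduceSub, apply_two_of_oddDFRec h1 hrec]
  simp only [oddDF, prod_range_succ, prod_range_zero] at h3 ⊢
  omega

lemma sum_Icc_three_oddDF_mul_le (h1 : a 1 = 1) (hrec : OddDFRec a) (m : ℕ) :
    ∑ k ∈ Icc 3 (m + 2), oddDF (m + 5 - k) * a k ≤ m * (15 * oddDF (m + 2)) := by
  have := sum_le_card_nsmul (Icc 3 (m + 2)) (fun k => oddDF (m + 5 - k) * a k)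
    (15 * oddDF (m + 2)) fun k hk => by
      rw [mem_Icc] at hk
      calc oddDF (m + 5 - k) * a k ≤ oddDF (m + 5 - k) * oddDF k :=
            Nat.mul_le_mul_left _ (le_oddDF_of_oddDFRec h1 hrec (by omega))
        _ ≤ oddDF 3 * oddDF (m + 5 - k + k - 3) := oddDF_mul_oddDF_le (by omega) (by omega)
        _ = 15 * oddDF (m + 2) := by rw [show m + 5 - k + k - 3 = m + 2 by omega]; rfl
  simpa using this

lemma oddDFConv_add_five_lt (h1 : a 1 = 1) (hrec : OddDFRec a) (m : ℕ) :
    oddDFConv a (m + 5) < 3 * oddDF (m + 4) := by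
  rw [oddDFConv, show m + 5 - 1 = m + 3 + 1 by rfl, sum_Icc_succ_top (by omega),
    sum_Icc_succ_top (by omega), sum_Icc_eq_add_sum_Icc_succ _ (by omega),
    sum_Icc_eq_add_sum_Icc_succ _ (by omega)]
  simp only [Nat.reduceAdd, h1, apply_two_of_oddDFRec h1 hrec, show m + 5 - 1 = m + 4 by omega,
    show m + 5 - 2 = m + 3 by omega, show m + 5 - (m + 2 + 1) = 2 by omega,
    show m + 5 - (m + 3 + 1) = 1 by omega]
  have hinner := sum_Icc_three_oddDF_mul_le h1 hrec m
  have hm3 := le_oddDF_of_oddDFRec h1 hrec (k := m + 2 + 1) (by omega)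
  have hm4 := le_oddDF_of_oddDFRec h1 hrec (k := m + 3 + 1) (by omega)
  rw [show oddDF 2 = 3 from rfl, show oddDF 1 = 1 from rfl, oddDF_succ (m + 3),
    oddDF_succ (m + 2)] at *
  have := oddDF_pos (m + 2)
  -- the slack is `(4 m^2 - m + 10) * oddDF (m + 2)`
  nlinarith [Nat.mul_le_mul_right (oddDF (m + 2)) (show m ≤ m * m + 1 by nlinarith)]

end Recursion

/-- If `a(1)=1` and `a(d) = (2d-1)!! − ∑_{k=1}^{d-1} (2d-2k-1)!!·a(k)` for `d ≥ 2`,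
then `a(d) > (2d-4)·(2d-3)!!` for all `d ≥ 4`. -/
theorem a_lower_bound (a : ℕ → ℕ) (h1 : a 1 = 1)
    (hrec : ∀ d, 2 ≤ d → a d = oddDF d - ∑ k ∈ Finset.Icc 1 (d - 1), oddDF (d - k) * a k) :
    ∀ d, 4 ≤ d → (2 * d - 4) * oddDF (d - 1) < a d := by
  intro d hd
  refine lt_apply_of_oddDFConv_lt hrec (by omega) ?_
  obtain rfl | hd := hd.eq_or_lt
  · exact oddDFConv_four_lt h1 hrec
  · obtain ⟨m, rfl⟩ := Nat.exists_eq_add_of_le' hd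
    exact oddDFConv_add_five_lt h1 hrec m
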